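/- There is a universal constant C > 0 with the following property. Let X be a Banach space, π an action of ℍ on X by linear isometric automorphisms, and f : ℍ → X a 1-Lipschitz 1-cocycle for π. Then for every m, n ∈ ℕ: ‖P_m f(c^{n²})‖ ≤ C · n^{5/3} / 2^{m/3}. -/

import Mathlib

open scoped BigOperators

/-- The discrete Heisenberg group `ℍ`, realized via the coordinates of the
3×3 upper-triangular integer matrices `[[1, x, z], [0, 1, y], [0, 0, 1]]`
with unit diagonal. -/
@[ext] structure Heis where
  x : ℤ
  y : ℤ
  z : ℤ

namespace Heis

instance : One Heis := ⟨⟨0, 0, 0⟩⟩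
instance : Mul Heis := ⟨fun g h => ⟨g.x + h.x, g.y + h.y, g.z + h.z + g.x * h.y⟩⟩
instance : Inv Heis := ⟨fun g => ⟨-g.x, -g.y, -g.z + g.x * g.y⟩⟩

@[simp] lemma mul_def (g h : Heis) :
    g * h = ⟨g.x + h.x, g.y + h.y, g.z + h.z + g.x * h.y⟩ := rfl
@[simp] lemma one_def : (1 : Heis) = ⟨0, 0, 0⟩ := rfl
@[simp] lemma inv_def (g : Heis) : g⁻¹ = ⟨-g.x, -g.y, -g.z + g.x * g.y⟩ := rfl

instance : Group Heis where
  mul_assoc g h k := by ext <;> simp <;> ring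
  one_mul g := by ext <;> simp
  mul_one g := by ext <;> simp
  inv_mul_cancel g := by ext <;> simp <;> ring

/-- The generator `a`. -/
def A : Heis := ⟨1, 0, 0⟩
/-- The generator `b`. -/
def B : Heis := ⟨0, 1, 0⟩
/-- The commutator `c = a * b * a⁻¹ * b⁻¹`, a central element. -/
def C : Heis := A * B * A⁻¹ * B⁻¹
/-- The symmetric generating set `S = {a, b, a⁻¹, b⁻¹}`. -/
def S : Set Heis := {A, B, A⁻¹, B⁻¹}

/-- The word length of `g` with respect to the generating set `S`. -/
noncomputable def wordLength (g : Heis) : ℕ :=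
  sInf {n : ℕ | ∃ l : List Heis, l.length = n ∧ (∀ s ∈ l, s ∈ S) ∧ l.prod = g}

/-- The left-invariant word metric `d_W` on `ℍ` associated to `S`. -/
noncomputable def dW (g h : Heis) : ℕ := wordLength (g⁻¹ * h)

end Heis

/-- The averaging operator `P_n = 2^{−n}·∑_{j<2^n} π(c)^j` associated to an action `π` of
`ℍ` by linear isometric automorphisms, where `c = aba⁻¹b⁻¹`. -/
noncomputable def Pop {X : Type*} [NormedAddCommGroup X] [NormedSpace ℝ X]
    (π : Heis →* (X ≃ₗᵢ[ℝ] X)) (n : ℕ) (v : X) : X :=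
  ((2 : ℝ) ^ n)⁻¹ • ∑ j ∈ Finset.range (2 ^ n), (π Heis.C ^ j) v

/-! A 1-Lipschitz cocycle vanishes at `1`, so `‖f g‖` is at most the word length of `g`; and
`c ^ (p * q)` is the commutator of `a ^ p` and `b ^ q`, so `c ^ j` has word length `O(√j)`.
The cocycle identity `π(c)^j f(c^k) = f(c^(k+j)) - f(c^j)` makes the sum defining
`P_m f(c^k)` telescope to `2k` terms, each of size `O(2^(m/2))` when `k ≤ 2^m`; for
`k = n²` this gives `‖P_m f(c^(n²))‖ = O(n² / 2^(m/2))` when `n² ≤ 2^m`, while the trivial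
bound `‖P_m v‖ ≤ ‖v‖` gives `O(n)`. Either way the norm is `O(min(n, n² / 2^(m/2)))`, which is
at most the weighted geometric mean `n^(1/3) (n² / 2^(m/2))^(2/3) = n^(5/3) / 2^(m/3)`. -/

open Finset
open scoped commutatorElement

theorem le_mul_rpow_div_rpow_of_dichotomy {C x y p : ℝ} (hC : 0 ≤ C) (hx : 0 < x) (hy : 0 < y)
    (hsmall : p ≤ C * x) (hlarge : x ^ 2 ≤ y → p ≤ C * x ^ 2 / √y) :
    p ≤ C * x ^ ((5 : ℝ) / 3) / y ^ ((1 : ℝ) / 3) := by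
  -- With `x = w ^ 3` and `y = u ^ 6` all exponents become integers.
  set w := x ^ ((1 : ℝ) / 3)
  set u := y ^ ((1 : ℝ) / 6)
  have hw : 0 < w := by positivity
  have hu : 0 < u := by positivity
  have hw3 : w ^ 3 = x := by rw [← Real.rpow_mul_natCast hx.le]; norm_num
  have hw5 : w ^ 5 = x ^ ((5 : ℝ) / 3) := by rw [← Real.rpow_mul_natCast hx.le]; norm_num
  have hu2 : u ^ 2 = y ^ ((1 : ℝ) / 3) := by rw [← Real.rpow_mul_natCast hy.le]; norm_num
  have hu6 : u ^ 6 = y := by rw [← Real.rpow_mul_natCast hy.le]; norm_num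
  rw [← hw5, ← hu2]
  rcases le_total u w with huw | hwu
  · calc p ≤ C * w ^ 3 := hw3 ▸ hsmall
      _ ≤ C * w ^ 5 / u ^ 2 := by
        have huw2 : u ^ 2 ≤ w ^ 2 := pow_le_pow_left₀ hu.le huw 2
        rw [le_div_iff₀ (by positivity), show C * w ^ 5 = C * w ^ 3 * w ^ 2 by ring]
        gcongr
  · have hxy : x ^ 2 ≤ y := by
      rw [← hu6, ← hw3, ← pow_mul]; exact pow_le_pow_left₀ hw.le hwu 6
    calc p ≤ C * w ^ 6 / u ^ 3 := by
          have h := hlarge hxy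
          rwa [← hw3, ← hu6, ← pow_mul, show u ^ 6 = (u ^ 3) ^ 2 by ring,
            Real.sqrt_sq (by positivity)] at h
      _ ≤ C * w ^ 5 / u ^ 2 := by
        rw [div_le_div_iff₀ (by positivity) (by positivity),
          show C * w ^ 6 * u ^ 2 = C * w ^ 5 * u ^ 2 * w by ring,
          show C * w ^ 5 * u ^ 3 = C * w ^ 5 * u ^ 2 * u by ring]
        gcongr

section Cocycle

variable {G R X : Type*} [Group G] [Semiring R] [SeminormedAddCommGroup X] [Module R X]

def IsCocycle (π : G →* (X ≃ₗᵢ[R] X)) (f : G → X) : Prop :=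
  ∀ g h : G, f (g * h) = π g (f h) + f g

variable {π : G →* (X ≃ₗᵢ[R] X)} {f : G → X}

theorem IsCocycle.map_one (hf : IsCocycle π f) : f 1 = 0 := by
  simpa using hf 1 1

theorem IsCocycle.map_pow_add (hf : IsCocycle π f) (g : G) (j k : ℕ) :
    f (g ^ (j + k)) = (π g ^ j) (f (g ^ k)) + f (g ^ j) := by
  rw [pow_add, hf, map_pow]

theorem sum_range_comp_add_sub {A : Type*} [AddCommGroup A] (F : ℕ → A) (N k : ℕ) :
    ∑ j ∈ range N, (F (k + j) - F j) = ∑ i ∈ range k, (F (N + i) - F i) := by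
  rw [sum_sub_distrib, sum_sub_distrib, sub_eq_sub_iff_add_eq_add, add_comm,
    ← sum_range_add, add_comm k N, sum_range_add, add_comm]

theorem IsCocycle.sum_range_pow_apply (hf : IsCocycle π f) (g : G) (N k : ℕ) :
    ∑ j ∈ range N, (π g ^ j) (f (g ^ k)) = ∑ i ∈ range k, (f (g ^ (N + i)) - f (g ^ i)) := by
  rw [← sum_range_comp_add_sub (fun j => f (g ^ j))]
  refine sum_congr rfl fun j _ => ?_
  rw [add_comm k j, hf.map_pow_add, add_sub_cancel_right]

theorem norm_sum_range_sub_le {F : ℕ → X} {N k : ℕ} {M : ℝ} (hM : ∀ j < N + k, ‖F j‖ ≤ M) :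
    ‖∑ i ∈ range k, (F (N + i) - F i)‖ ≤ 2 * k * M := by
  have hterm : ∀ i ∈ range k, ‖F (N + i) - F i‖ ≤ 2 * M := fun i hi => by
    have hik := mem_range.mp hi
    linarith [norm_sub_le (F (N + i)) (F i), hM (N + i) (by omega), hM i (by omega)]
  calc ‖∑ i ∈ range k, (F (N + i) - F i)‖ ≤ ∑ i ∈ range k, ‖F (N + i) - F i‖ := norm_sum_le _ _
    _ ≤ k * (2 * M) := by simpa using sum_le_card_nsmul _ _ _ hterm
    _ = 2 * k * M := by ring

end Cocycle

namespace Heis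

theorem C_eq : C = ⟨0, 0, 1⟩ := by
  ext <;> simp [C, A, B]

theorem A_pow (p : ℕ) : A ^ p = ⟨p, 0, 0⟩ := by
  induction p with
  | zero => rfl
  | succ p ih => rw [pow_succ, ih]; ext <;> simp [A]

theorem B_pow (p : ℕ) : B ^ p = ⟨0, p, 0⟩ := by
  induction p with
  | zero => rfl
  | succ p ih => rw [pow_succ, ih]; ext <;> simp [B]

theorem C_pow (p : ℕ) : C ^ p = ⟨0, 0, p⟩ := by
  induction p with
  | zero => rfl
  | succ p ih => rw [pow_succ, ih]; ext <;> simp [C_eq]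

theorem commutatorElement_A_pow_B_pow (p q : ℕ) : ⁅A ^ p, B ^ q⁆ = C ^ (p * q) := by
  ext <;> simp [commutatorElement_def, A_pow, B_pow, C_pow]

def commutatorWord (p q : ℕ) : List Heis :=
  .replicate p A ++ .replicate q B ++ .replicate p A⁻¹ ++ .replicate q B⁻¹

theorem prod_commutatorWord (p q : ℕ) : (commutatorWord p q).prod = C ^ (p * q) := by
  simp only [commutatorWord, List.prod_append, List.prod_replicate, inv_pow,
    ← commutatorElement_def, commutatorElement_A_pow_B_pow]

theorem length_commutatorWord (p q : ℕ) : (commutatorWord p q).length = 2 * p + 2 * q := by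
  simp [commutatorWord]; ring

theorem mem_S_of_mem_commutatorWord {p q : ℕ} {s : Heis} (hs : s ∈ commutatorWord p q) :
    s ∈ S := by
  simp only [commutatorWord, List.mem_append, List.mem_replicate] at hs
  simp only [S, Set.mem_insert_iff, Set.mem_singleton_iff]
  tauto

theorem wordLength_prod_le_length {l : List Heis} (hl : ∀ s ∈ l, s ∈ S) :
    wordLength l.prod ≤ l.length :=
  Nat.sInf_le ⟨l, rfl, hl, rfl⟩

theorem wordLength_C_pow_mul_add_le (p q r : ℕ) :
    wordLength (C ^ (p * q + r)) ≤ 2 * p + 2 * q + 2 * r + 2 := by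
  have h := wordLength_prod_le_length (l := commutatorWord p q ++ commutatorWord 1 r) fun s hs =>
    (List.mem_append.mp hs).elim mem_S_of_mem_commutatorWord mem_S_of_mem_commutatorWord
  simp only [List.prod_append, prod_commutatorWord, List.length_append,
    length_commutatorWord, one_mul, ← pow_add] at h
  omega

theorem wordLength_C_pow_le (j : ℕ) : (wordLength (C ^ j) : ℝ) ≤ 6 * (√j + 1) := by
  set p := Nat.sqrt j + 1
  have hp : 0 < p := Nat.succ_pos _
  have hq : j / p < p := (Nat.div_lt_iff_lt_mul hp).mpr (Nat.lt_succ_sqrt j)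
  have hr : j % p < p := Nat.mod_lt _ hp
  have hword := wordLength_C_pow_mul_add_le p (j / p) (j % p)
  rw [Nat.div_add_mod] at hword
  have hsqrt : (Nat.sqrt j : ℝ) ≤ √j := Real.nat_sqrt_le_real_sqrt
  have : (wordLength (C ^ j) : ℝ) ≤ 6 * (Nat.sqrt j + 1 : ℕ) := by exact_mod_cast (by omega)
  push_cast at this
  linarith

theorem norm_le_wordLength {X : Type*} [SeminormedAddCommGroup X] {f : Heis → X} (h1 : f 1 = 0)
    (hlip : ∀ g h : Heis, ‖f g - f h‖ ≤ (dW g h : ℝ)) (g : Heis) : ‖f g‖ ≤ wordLength g := by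
  simpa only [dW, inv_one, one_mul, h1, zero_sub, norm_neg] using hlip 1 g

end Heis

section Averaging

variable {X : Type*} [NormedAddCommGroup X] [NormedSpace ℝ X] {π : Heis →* (X ≃ₗᵢ[ℝ] X)}

theorem norm_Pop_le (m : ℕ) (v : X) : ‖Pop π m v‖ ≤ ‖v‖ := by
  have hsum : ‖∑ j ∈ range (2 ^ m), (π Heis.C ^ j) v‖ ≤ ∑ j ∈ range (2 ^ m), ‖v‖ :=
    norm_sum_le_of_le _ fun j _ => ((π Heis.C ^ j).norm_map v).le
  rw [Pop, norm_smul, norm_inv, norm_pow, Real.norm_two, inv_mul_le_iff₀ (by positivity)]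
  simpa using hsum

theorem IsCocycle.norm_Pop_C_pow_le {f : Heis → X} (hf : IsCocycle π f) {m k : ℕ} {M : ℝ}
    (hM : ∀ j < 2 ^ m + k, ‖f (Heis.C ^ j)‖ ≤ M) :
    ‖Pop π m (f (Heis.C ^ k))‖ ≤ 2 * k * M / 2 ^ m := by
  rw [Pop, hf.sum_range_pow_apply, norm_smul, norm_inv, norm_pow, Real.norm_two, inv_mul_eq_div]
  gcongr
  exact norm_sum_range_sub_le hM

theorem IsCocycle.norm_Pop_C_pow_le_of_le {f : Heis → X} (hf : IsCocycle π f)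
    (hlip : ∀ g h : Heis, ‖f g - f h‖ ≤ (Heis.dW g h : ℝ)) {m k : ℕ} (hk : k ≤ 2 ^ m) :
    ‖Pop π m (f (Heis.C ^ k))‖ ≤ 36 * k / √(2 ^ m) := by
  have hN : 1 ≤ √(2 ^ m : ℝ) := Real.one_le_sqrt.mpr (one_le_pow₀ one_le_two)
  have hM : ∀ j < 2 ^ m + k, ‖f (Heis.C ^ j)‖ ≤ 18 * √(2 ^ m) := fun j hj => by
    have hj : (j : ℝ) ≤ 2 * 2 ^ m := by exact_mod_cast (by omega : j ≤ 2 * 2 ^ m)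
    calc ‖f (Heis.C ^ j)‖ ≤ Heis.wordLength (Heis.C ^ j) :=
          Heis.norm_le_wordLength hf.map_one hlip _
      _ ≤ 6 * (√j + 1) := Heis.wordLength_C_pow_le j
      _ ≤ 6 * (√2 * √(2 ^ m) + 1) := by rw [← Real.sqrt_mul zero_le_two]; gcongr
      _ ≤ 18 * √(2 ^ m) := by nlinarith [Real.sqrt_two_lt_three_halves]
  calc ‖Pop π m (f (Heis.C ^ k))‖ ≤ 2 * k * (18 * √(2 ^ m)) / 2 ^ m := hf.norm_Pop_C_pow_le hM
    _ = 36 * k / √(2 ^ m) := by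
      rw [div_eq_div_iff (by positivity) (by positivity)]
      linear_combination 36 * (k : ℝ) * Real.mul_self_sqrt (by positivity : (0 : ℝ) ≤ 2 ^ m)

end Averaging

/-- **Lemma 4.2.** There is a universal `C > 0` such that: for every Banach space `X`,
action `π` of `ℍ` on `X` by linear isometric automorphisms, and `1`-Lipschitz `1`-cocycle
`f : ℍ → X`, for all `m, n ∈ ℕ` we have `‖P_m f(c^{n²})‖ ≤ C·n^{5/3}/2^{m/3}`. -/
theorem heisenberg_cocycle_averaged_bound :
    ∃ C : ℝ, 0 < C ∧
      ∀ (X : Type*) [NormedAddCommGroup X] [NormedSpace ℝ X] [CompleteSpace X],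
        ∀ (π : Heis →* (X ≃ₗᵢ[ℝ] X)) (f : Heis → X),
          (∀ g h : Heis, f (g * h) = π g (f h) + f g) →
          (∀ g h : Heis, ‖f g - f h‖ ≤ (Heis.dW g h : ℝ)) →
          ∀ m n : ℕ, 1 ≤ m → 1 ≤ n →
            ‖Pop π m (f (Heis.C ^ (n ^ 2)))‖ ≤
              C * (n : ℝ) ^ ((5 : ℝ) / 3) / (2 : ℝ) ^ ((m : ℝ) / 3) := by
  refine ⟨36, by norm_num, fun X _ _ _ π f hcocycle hlip m n _ hn => ?_⟩
  have hf : IsCocycle π f := hcocycle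
  have hn1 : (1 : ℝ) ≤ n := by exact_mod_cast hn
  have h2m : (2 : ℝ) ^ ((m : ℝ) / 3) = (2 ^ m : ℝ) ^ ((1 : ℝ) / 3) := by
    rw [← Real.rpow_natCast, ← Real.rpow_mul zero_le_two, mul_one_div]
  rw [h2m]
  refine le_mul_rpow_div_rpow_of_dichotomy (by norm_num) (by positivity) (by positivity) ?_ ?_
  · calc ‖Pop π m (f (Heis.C ^ (n ^ 2)))‖ ≤ ‖f (Heis.C ^ (n ^ 2))‖ := norm_Pop_le m _
      _ ≤ Heis.wordLength (Heis.C ^ (n ^ 2)) := Heis.norm_le_wordLength hf.map_one hlip _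
      _ ≤ 6 * (√(n ^ 2 : ℕ) + 1) := Heis.wordLength_C_pow_le _
      _ ≤ 36 * n := by push_cast; rw [Real.sqrt_sq (by positivity)]; linarith
  · intro hnm
    have hk : n ^ 2 ≤ 2 ^ m := by exact_mod_cast hnm
    simpa using hf.norm_Pop_C_pow_le_of_le hlip hk
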